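/- If all five partial derivatives of f vanish at some point (x₀,y₀,z₀,u₀,v₀) ∈ ℂ⁵ with (x₀,y₀,z₀) ≠ (0,0,0) (i.e. the cubic X has a singular point outside the line l), then either det A is the zero polynomial, or there exists (x₁,y₁,z₁) ∈ ℂ³ \ {(0,0,0)} at which det A and all three of its partial derivatives vanish (i.e. the spectral quintic curve {det A = 0} ⊂ P² has a singular point). -/
import Mathlib
open MvPolynomial

lemma pderiv_mem_supported {s : Set (Fin 5)} {p : MvPolynomial (Fin 5) ℂ}
    (hp : p ∈ supported ℂ s) (i : Fin 5) : pderiv i p ∈ supported ℂ s := by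
  refine Algebra.adjoin_induction (p := fun x _ => pderiv i x ∈ supported ℂ s)
    ?_ ?_ ?_ ?_ hp
  · rintro _ ⟨j, hj, rfl⟩
    by_cases h : i = j
    · subst h; rw [pderiv_X_self]; exact one_mem _
    · rw [pderiv_X_of_ne (Ne.symm h)]; exact zero_mem _
  · intro r; rw [algebraMap_eq, pderiv_C]; exact zero_mem _
  · intro x y _ _ hx hy; rw [map_add]; exact add_mem hx hy
  · intro x y hxm hym hx hy
    rw [pderiv_mul]
    exact add_mem (mul_mem hx hym) (mul_mem hxm hy)

lemma eval_congr_supported {s : Set (Fin 5)} {p : MvPolynomial (Fin 5) ℂ}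
    (hp : p ∈ supported ℂ s) {g₁ g₂ : Fin 5 → ℂ} (h : ∀ j ∈ s, g₁ j = g₂ j) :
    eval g₁ p = eval g₂ p := by
  refine Algebra.adjoin_induction (p := fun x _ => eval g₁ x = eval g₂ x) ?_ ?_ ?_ ?_ hp
  · rintro _ ⟨j, hj, rfl⟩; simp [h j hj]
  · intro r; simp
  · intro x y _ _ hx hy; simp [hx, hy]
  · intro x y _ _ hx hy; simp [hx, hy]

lemma euler_mono (d : Fin 5 →₀ ℕ) (c : ℂ) :
    ∑ i : Fin 5, X i * pderiv i (monomial d c) = (∑ i : Fin 5, d i) • monomial d c := by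
  rw [Finset.sum_smul]
  refine Finset.sum_congr rfl fun i _ => ?_
  rw [pderiv_monomial]
  by_cases h : d i = 0
  · simp [h]
  · rw [X, monomial_mul, one_mul,
      add_tsub_cancel_of_le (by simpa [Finsupp.single_le_iff] using Nat.one_le_iff_ne_zero.2 h)]
    rw [smul_monomial, nsmul_eq_mul, mul_comm]

lemma euler5 {n : ℕ} {φ : MvPolynomial (Fin 5) ℂ} (h : φ.IsHomogeneous n) :
    ∑ i : Fin 5, X i * pderiv i φ = n • φ := by
  conv_lhs => rw [φ.as_sum]
  simp only [map_sum, Finset.mul_sum]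
  rw [Finset.sum_comm]
  conv_rhs => rw [φ.as_sum, Finset.smul_sum]
  refine Finset.sum_congr rfl fun d hd => ?_
  rw [euler_mono]
  congr 1
  have hc : coeff d φ ≠ 0 := mem_support_iff.mp hd
  have := h hc
  rw [Finsupp.weight_apply, Finsupp.sum_fintype] at this
  · simpa using this
  · intro i; simp

lemma pderiv_two (i : Fin 5) : pderiv i (2 : MvPolynomial (Fin 5) ℂ) = 0 := by
  rw [← map_ofNat (C : ℂ →+* MvPolynomial (Fin 5) ℂ) 2]
  exact pderiv_C

/-- If the cubic f = u²L₁₁ + 2uvL₁₂ + v²L₂₂ + 2uQ₁ + 2vQ₂ + C has a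
singular point outside the line l = {x = y = z = 0} (all five partials vanish at a
point with (x₀,y₀,z₀) ≠ 0), then either det A is the zero polynomial, or the spectral
quintic {det A = 0} ⊂ P² has a singular point: there is (x₁,y₁,z₁) ≠ 0 at which det A
and its three partial derivatives (w.r.t. x, y, z) vanish.  Here A is the fundamental
matrix !![L₁₁, L₁₂, Q₁; L₁₂, L₂₂, Q₂; Q₁, Q₂, C]. -/
theorem stmt_16
    (L11 L12 L22 Q1 Q2 C : MvPolynomial (Fin 5) ℂ)
    (hL11 : L11.IsHomogeneous 1) (hL12 : L12.IsHomogeneous 1) (hL22 : L22.IsHomogeneous 1)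
    (hQ1 : Q1.IsHomogeneous 2) (hQ2 : Q2.IsHomogeneous 2) (hC : C.IsHomogeneous 3)
    (hL11s : L11 ∈ MvPolynomial.supported ℂ ({0, 1, 2} : Set (Fin 5)))
    (hL12s : L12 ∈ MvPolynomial.supported ℂ ({0, 1, 2} : Set (Fin 5)))
    (hL22s : L22 ∈ MvPolynomial.supported ℂ ({0, 1, 2} : Set (Fin 5)))
    (hQ1s : Q1 ∈ MvPolynomial.supported ℂ ({0, 1, 2} : Set (Fin 5)))
    (hQ2s : Q2 ∈ MvPolynomial.supported ℂ ({0, 1, 2} : Set (Fin 5)))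
    (hCs : C ∈ MvPolynomial.supported ℂ ({0, 1, 2} : Set (Fin 5)))
    (f : MvPolynomial (Fin 5) ℂ)
    (hf : f = X 3 ^ 2 * L11 + 2 * X 3 * X 4 * L12 + X 4 ^ 2 * L22
      + 2 * X 3 * Q1 + 2 * X 4 * Q2 + C)
    (A : Matrix (Fin 3) (Fin 3) (MvPolynomial (Fin 5) ℂ))
    (hA : A = !![L11, L12, Q1; L12, L22, Q2; Q1, Q2, C])
    (hsing : ∃ x₀ y₀ z₀ u₀ v₀ : ℂ, ¬(x₀ = 0 ∧ y₀ = 0 ∧ z₀ = 0) ∧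
      ∀ i : Fin 5,
        eval (fun j => if j = 0 then x₀ else if j = 1 then y₀ else if j = 2 then z₀
          else if j = 3 then u₀ else v₀) (pderiv i f) = 0) :
    A.det = 0 ∨
      ∃ x₁ y₁ z₁ : ℂ, ¬(x₁ = 0 ∧ y₁ = 0 ∧ z₁ = 0) ∧
        eval (fun j => if j = 0 then x₁ else if j = 1 then y₁ else if j = 2 then z₁ else 0)
          A.det = 0 ∧
        ∀ i : Fin 5, (i : ℕ) < 3 →
          eval (fun j => if j = 0 then x₁ else if j = 1 then y₁ else if j = 2 then z₁ else 0)
            (pderiv i A.det) = 0 := by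
  obtain ⟨x₀, y₀, z₀, u₀, v₀, hnz, hp⟩ := hsing
  set σp : Fin 5 → ℂ := fun j => if j = 0 then x₀ else if j = 1 then y₀ else if j = 2 then z₀
      else if j = 3 then u₀ else v₀ with hσp
  set τp : Fin 5 → ℂ := fun j => if j = 0 then x₀ else if j = 1 then y₀ else if j = 2 then z₀
      else 0 with hτp
  have hagree : ∀ j ∈ ({0, 1, 2} : Set (Fin 5)), τp j = σp j := by
    rintro j (rfl | rfl | rfl) <;> simp [hσp, hτp]
  have hcongr : ∀ p ∈ supported ℂ ({0, 1, 2} : Set (Fin 5)), eval τp p = eval σp p :=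
    fun p hps => eval_congr_supported hps hagree
  -- σp values
  have hσ0 : σp 0 = x₀ := by simp [hσp]
  have hσ1 : σp 1 = y₀ := by simp [hσp]
  have hσ2 : σp 2 = z₀ := by simp [hσp]
  have hσ3 : σp 3 = u₀ := by simp [hσp]
  have hσ4 : σp 4 = v₀ := by simp [hσp]
  -- pderiv 3 / 4 of the supported polynomials vanish
  have hz : ∀ p ∈ supported ℂ ({0, 1, 2} : Set (Fin 5)),
      pderiv (3 : Fin 5) p = 0 ∧ pderiv (4 : Fin 5) p = 0 := by
    intro p hps
    have hv := mem_supported.mp hps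
    constructor <;>
    · apply pderiv_eq_zero_of_notMem_vars
      intro hmem
      have := hv hmem
      simp_all

  obtain ⟨hL11z3, hL11z4⟩ := hz L11 hL11s
  obtain ⟨hL12z3, hL12z4⟩ := hz L12 hL12s
  obtain ⟨hL22z3, hL22z4⟩ := hz L22 hL22s
  obtain ⟨hQ1z3, hQ1z4⟩ := hz Q1 hQ1s
  obtain ⟨hQ2z3, hQ2z4⟩ := hz Q2 hQ2s
  obtain ⟨hCz3, hCz4⟩ := hz C hCs
  have h43 : pderiv (3:Fin 5) (X 4 : MvPolynomial (Fin 5) ℂ) = 0 := pderiv_X_of_ne (by decide)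
  have h34 : pderiv (4:Fin 5) (X 3 : MvPolynomial (Fin 5) ℂ) = 0 := pderiv_X_of_ne (by decide)
  -- partial in u
  have H3 : u₀ * eval σp L11 + v₀ * eval σp L12 + eval σp Q1 = 0 := by
    have h := hp 3
    rw [hf] at h
    simp only [map_add, pderiv_mul, pderiv_pow, pderiv_two, pderiv_X_self, h43,
      hL11z3, hL12z3, hL22z3, hQ1z3, hQ2z3, hCz3] at h
    simp [hσ3, hσ4] at h
    linear_combination h / 2
  have H4 : u₀ * eval σp L12 + v₀ * eval σp L22 + eval σp Q2 = 0 := by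
    have h := hp 4
    rw [hf] at h
    simp only [map_add, pderiv_mul, pderiv_pow, pderiv_two, pderiv_X_self, h34,
      hL11z4, hL12z4, hL22z4, hQ1z4, hQ2z4, hCz4] at h
    simp [hσ3, hσ4] at h
    linear_combination h / 2
  -- Euler: f vanishes at the singular point
  have hfh : f.IsHomogeneous 3 := by
    rw [hf]
    have h2 : (2 : MvPolynomial (Fin 5) ℂ).IsHomogeneous 0 := by
      rw [← map_ofNat (MvPolynomial.C : ℂ →+* MvPolynomial (Fin 5) ℂ) 2]
      exact isHomogeneous_C _ _
    have hX3 : (X (3:Fin 5) : MvPolynomial (Fin 5) ℂ).IsHomogeneous 1 := isHomogeneous_X _ _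
    have hX4 : (X (4:Fin 5) : MvPolynomial (Fin 5) ℂ).IsHomogeneous 1 := isHomogeneous_X _ _
    have t1 : (X (3:Fin 5) ^ 2 * L11).IsHomogeneous 3 := by
      have := (hX3.pow 2).mul hL11; norm_num at this; exact this
    have t2 : (2 * X (3:Fin 5) * X 4 * L12).IsHomogeneous 3 := by
      have := ((h2.mul hX3).mul hX4).mul hL12; norm_num at this; exact this
    have t3 : (X (4:Fin 5) ^ 2 * L22).IsHomogeneous 3 := by
      have := (hX4.pow 2).mul hL22; norm_num at this; exact this
    have t4 : (2 * X (3:Fin 5) * Q1).IsHomogeneous 3 := by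
      have := (h2.mul hX3).mul hQ1; norm_num at this; exact this
    have t5 : (2 * X (4:Fin 5) * Q2).IsHomogeneous 3 := by
      have := (h2.mul hX4).mul hQ2; norm_num at this; exact this
    exact ((((t1.add t2).add t3).add t4).add t5).add hC
  have hfeval : eval σp f = 0 := by
    have h := congrArg (eval σp) (euler5 hfh)
    simp only [map_sum, eval_mul, eval_X, hp, mul_zero, Finset.sum_const_zero] at h
    rw [show ((3:ℕ) • f) = f + f + f by ring] at h
    simp only [map_add] at h
    linear_combination -h / 3
  have H0 : u₀^2 * eval σp L11 + 2*u₀*v₀ * eval σp L12 + v₀^2 * eval σp L22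
      + 2*u₀ * eval σp Q1 + 2*v₀ * eval σp Q2 + eval σp C = 0 := by
    rw [hf] at hfeval
    simp only [map_add, map_mul, eval_pow, eval_X, eval_ofNat, hσ3, hσ4] at hfeval
    linear_combination hfeval
  have Hc : u₀ * eval σp Q1 + v₀ * eval σp Q2 + eval σp C = 0 := by
    linear_combination H0 - u₀ * H3 - v₀ * H4
  -- explicit determinant
  have hdet : A.det = L11*(L22*C) - L11*(Q2*Q2) - L12*(L12*C) + L12*(Q2*Q1)
      + Q1*(L12*Q2) - Q1*(L22*Q1) := by
    rw [hA, Matrix.det_fin_three]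
    simp [Matrix.cons_val_zero, Matrix.cons_val_one, Matrix.head_cons]
    ring
  have ca : eval τp L11 = eval σp L11 := hcongr _ hL11s
  have cb : eval τp L12 = eval σp L12 := hcongr _ hL12s
  have ce : eval τp L22 = eval σp L22 := hcongr _ hL22s
  have cq1 : eval τp Q1 = eval σp Q1 := hcongr _ hQ1s
  have cq2 : eval τp Q2 = eval σp Q2 := hcongr _ hQ2s
  have cc : eval τp C = eval σp C := hcongr _ hCs
  right
  refine ⟨x₀, y₀, z₀, hnz, ?_, ?_⟩
  · rw [← hτp, hdet]
    simp only [map_add, map_sub, map_mul, ca, cb, ce, cq1, cq2, cc]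
    linear_combination (eval σp L12 * eval σp Q2 - eval σp L22 * eval σp Q1) * H3
      + (eval σp L12 * eval σp Q1 - eval σp L11 * eval σp Q2) * H4
      + (eval σp L11 * eval σp L22 - eval σp L12 * eval σp L12) * Hc
  · intro i hi
    have hi3 : pderiv i (X 3 : MvPolynomial (Fin 5) ℂ) = 0 :=
      pderiv_X_of_ne (Fin.ne_of_val_ne (by omega))
    have hi4 : pderiv i (X 4 : MvPolynomial (Fin 5) ℂ) = 0 :=
      pderiv_X_of_ne (Fin.ne_of_val_ne (by omega))
    have Hi : u₀^2 * eval σp (pderiv i L11) + 2*u₀*v₀ * eval σp (pderiv i L12)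
        + v₀^2 * eval σp (pderiv i L22) + 2*u₀ * eval σp (pderiv i Q1)
        + 2*v₀ * eval σp (pderiv i Q2) + eval σp (pderiv i C) = 0 := by
      have h := hp i
      rw [hf] at h
      simp only [map_add, pderiv_mul, pderiv_pow, pderiv_two, hi3, hi4] at h
      simp [hσ3, hσ4] at h
      linear_combination h
    have dca : eval τp (pderiv i L11) = eval σp (pderiv i L11) :=
      hcongr _ (pderiv_mem_supported hL11s i)
    have dcb : eval τp (pderiv i L12) = eval σp (pderiv i L12) :=
      hcongr _ (pderiv_mem_supported hL12s i)
    have dce : eval τp (pderiv i L22) = eval σp (pderiv i L22) :=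
      hcongr _ (pderiv_mem_supported hL22s i)
    have dcq1 : eval τp (pderiv i Q1) = eval σp (pderiv i Q1) :=
      hcongr _ (pderiv_mem_supported hQ1s i)
    have dcq2 : eval τp (pderiv i Q2) = eval σp (pderiv i Q2) :=
      hcongr _ (pderiv_mem_supported hQ2s i)
    have dcc : eval τp (pderiv i C) = eval σp (pderiv i C) :=
      hcongr _ (pderiv_mem_supported hCs i)
    rw [← hτp, hdet]
    simp only [map_add, map_sub, pderiv_mul, map_mul,
      ca, cb, ce, cq1, cq2, cc, dca, dcb, dce, dcq1, dcq2, dcc]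
    have hce : eval σp C = -(u₀ * eval σp Q1 + v₀ * eval σp Q2) := by linear_combination Hc
    have hqe1 : eval σp Q1 = -(u₀ * eval σp L11 + v₀ * eval σp L12) := by linear_combination H3
    have hqe2 : eval σp Q2 = -(u₀ * eval σp L12 + v₀ * eval σp L22) := by linear_combination H4
    rw [hce, hqe1, hqe2]
    linear_combination (eval σp L11 * eval σp L22 - eval σp L12 * eval σp L12) * Hi
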